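/- arXiv:math/0410214 — 2 statements merged into one kernel-verified Lean document; each statement's English description precedes it below -/
import Mathlib

section
/- (Chi-square tail bound.) Let Z_d be a random variable having the χ² distribution with d degrees of freedom. Then for all x > 0: P( Z_d − d ≥ x √(2d) ) ≤ exp( − x² / ( 2(1 + x √(2/d)) ) ). -/
/-!
Chernoff's bound: `E exp(t g²) = (1 - 2t)^{-1/2}` for a standard Gaussian `g` and `t < 1/2`, so
`P(Z_d ≥ d + s) ≤ exp(-t(d + s)) (1 - 2t)^{-d/2}`. With `t = s / (2(d + s))` the exponent becomes
`-s/2 + (d/2) log z` for `z = 1 + s/d`, and `log z ≤ (z - z⁻¹)/2` turns it into `-s² / (4(d + s))`,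
which for `s = x √(2d)` is the claimed bound.
-/

open MeasureTheory ProbabilityTheory Real

lemma mgf_sq_gaussianReal {t : ℝ} (ht : t < 1 / 2) :
    mgf (fun y ↦ y ^ 2) (gaussianReal 0 1) t = (√(1 - 2 * t))⁻¹ := by
  have hdens (y : ℝ) : gaussianPDFReal 0 1 y • exp (t * y ^ 2)
      = (√(2 * π))⁻¹ * exp (-(1 / 2 - t) * y ^ 2) := by
    simp only [gaussianPDFReal, NNReal.coe_one, mul_one, sub_zero, smul_eq_mul]
    rw [mul_assoc, ← exp_add]
    ring_nf
  have hb : 0 < 1 / 2 - t := by linarith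
  rw [mgf, integral_gaussianReal_eq_integral_smul one_ne_zero]
  simp only [hdens, integral_const_mul, integral_gaussian]
  rw [← sqrt_inv, ← sqrt_mul (by positivity), ← sqrt_inv]
  congr 1
  field_simp

lemma Real.log_le_sub_inv_div_two {z : ℝ} (hz : 1 ≤ z) : log z ≤ (z - z⁻¹) / 2 := by
  rw [← sinh_log (by positivity)]
  exact self_le_sinh_iff.mpr (log_nonneg hz)

lemma exp_neg_mul_mul_inv_sqrt_pow_le {d : ℕ} (hd : 0 < d) {s : ℝ} (hs : 0 ≤ s) :
    exp (-(s / (2 * (d + s))) * (d + s)) * (√(1 - 2 * (s / (2 * (d + s)))))⁻¹ ^ d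
      ≤ exp (-s ^ 2 / (4 * (d + s))) := by
  have hD : (0 : ℝ) < d := by exact_mod_cast hd
  have hDs : (0 : ℝ) < d + s := by linarith
  set z : ℝ := (d + s) / d with hz
  have hz1 : 1 ≤ z := by rw [hz, le_div_iff₀ hD]; linarith
  have hlinear : -(s / (2 * (d + s))) * (d + s) = -(s / 2) := by field_simp
  have hpow : (√(1 - 2 * (s / (2 * (d + s)))))⁻¹ ^ d = exp (d * log z / 2) := by
    have h1 : 1 - 2 * (s / (2 * (d + s))) = z⁻¹ := by rw [hz]; field_simp; ring
    rw [h1, sqrt_inv, inv_inv, ← exp_log (sqrt_pos.mpr (by positivity : 0 < z)), ← exp_nat_mul,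
      log_sqrt (by positivity)]
    ring_nf
  have hlog : d * log z ≤ d * ((z - z⁻¹) / 2) := by gcongr; exact Real.log_le_sub_inv_div_two hz1
  have hexponent : -(s / 2) + d * ((z - z⁻¹) / 2) / 2 = -s ^ 2 / (4 * (d + s)) := by
    rw [hz]; field_simp; ring
  rw [hlinear, hpow, ← exp_add, ← hexponent]
  gcongr

section StandardGaussianFamily

variable {Ω ι : Type*} [MeasurableSpace Ω] {P : Measure Ω} [Fintype ι] {g : ι → Ω → ℝ}

lemma aemeasurable_of_map_eq_gaussianReal {X : Ω → ℝ} {μ : ℝ} {v : NNReal}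
    (hX : P.map X = gaussianReal μ v) : AEMeasurable X P :=
  .of_map_ne_zero (by rw [hX]; exact IsProbabilityMeasure.ne_zero _)

lemma mgf_sq_of_map_eq_gaussianReal {X : Ω → ℝ} (hX : P.map X = gaussianReal 0 1) {t : ℝ}
    (ht : t < 1 / 2) : mgf (fun ω ↦ X ω ^ 2) P t = (√(1 - 2 * t))⁻¹ := by
  rw [← mgf_sq_gaussianReal ht, ← hX,
    mgf_map (aemeasurable_of_map_eq_gaussianReal hX) (by fun_prop)]
  rfl

lemma ProbabilityTheory.iIndepFun.mgf_sum_sq_of_map_eq_gaussianReal (hindep : iIndepFun g P)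
    (hlaw : ∀ i, P.map (g i) = gaussianReal 0 1) {t : ℝ} (ht : t < 1 / 2) :
    mgf (fun ω ↦ ∑ i, g i ω ^ 2) P t = (√(1 - 2 * t))⁻¹ ^ Fintype.card ι := by
  have hsq : iIndepFun (fun i ω ↦ g i ω ^ 2) P :=
    hindep.comp (fun _ y ↦ y ^ 2) (fun _ ↦ by fun_prop)
  have hsq_meas (i : ι) : AEMeasurable (fun ω ↦ g i ω ^ 2) P :=
    (aemeasurable_of_map_eq_gaussianReal (hlaw i)).pow_const 2
  have hsum := hsq.mgf_sum₀ hsq_meas Finset.univ (t := t)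
  rw [Finset.sum_fn] at hsum
  rw [hsum, Finset.prod_congr rfl fun i _ ↦ mgf_sq_of_map_eq_gaussianReal (hlaw i) ht,
    Finset.prod_const, Finset.card_univ]

lemma measureReal_sum_sq_ge_le [IsProbabilityMeasure P] (hindep : iIndepFun g P)
    (hlaw : ∀ i, P.map (g i) = gaussianReal 0 1) {t : ℝ} (ht₀ : 0 ≤ t) (ht : t < 1 / 2) (a : ℝ) :
    P.real {ω | a ≤ ∑ i, g i ω ^ 2} ≤ exp (-t * a) * (√(1 - 2 * t))⁻¹ ^ Fintype.card ι := by
  have hmgf := hindep.mgf_sum_sq_of_map_eq_gaussianReal hlaw ht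
  have hint : Integrable (fun ω ↦ exp (t * ∑ i, g i ω ^ 2)) P := by
    have : 0 < 1 - 2 * t := by linarith
    exact mgf_pos_iff.mp (by rw [hmgf]; positivity)
  simpa only [hmgf] using measure_ge_le_exp_mul_mgf a ht₀ hint

lemma measureReal_card_add_le_sum_sq_le [IsProbabilityMeasure P] [Nonempty ι]
    (hindep : iIndepFun g P) (hlaw : ∀ i, P.map (g i) = gaussianReal 0 1) {s : ℝ} (hs : 0 ≤ s) :
    P.real {ω | Fintype.card ι + s ≤ ∑ i, g i ω ^ 2}
      ≤ exp (-s ^ 2 / (4 * (Fintype.card ι + s))) := by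
  have hd : (0 : ℝ) < Fintype.card ι := by exact_mod_cast Fintype.card_pos
  have ht : s / (2 * (Fintype.card ι + s)) < 1 / 2 := by
    rw [div_lt_iff₀ (by positivity)]; linarith
  exact (measureReal_sum_sq_ge_le hindep hlaw (by positivity) ht _).trans
    (exp_neg_mul_mul_inv_sqrt_pow_le Fintype.card_pos hs)

end StandardGaussianFamily

theorem chi_square_tail_bound_general
    (d : ℕ) (hd : 1 ≤ d)
    (Ω : Type*) [MeasurableSpace Ω] (P : Measure Ω) [IsProbabilityMeasure P]
    (g : Fin d → Ω → ℝ)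
    (hindep : iIndepFun g P)
    (hlaw : ∀ i, P.map (g i) = gaussianReal 0 1)
    (x : ℝ) (hx : 0 < x) :
    P {ω | x * Real.sqrt (2 * d) ≤ (∑ i, (g i ω) ^ 2) - d}
      ≤ ENNReal.ofReal (Real.exp (-(x ^ 2) / (2 * (1 + x * Real.sqrt (2 / d))))) := by
  have hD : (0 : ℝ) < d := by exact_mod_cast hd
  have : Nonempty (Fin d) := ⟨⟨0, hd⟩⟩
  set s := x * √(2 * d) with hs
  have hsqrt : √(2 / d) = √(2 * d) / d := by
    rw [show (2 : ℝ) / d = 2 * d / d ^ 2 by field_simp, sqrt_div' _ (sq_nonneg _), sqrt_sq hD.le]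
  have hexponent : -x ^ 2 / (2 * (1 + x * √(2 / d))) = -s ^ 2 / (4 * (d + s)) := by
    rw [hsqrt, hs, mul_pow, sq_sqrt (by positivity)]
    field_simp
    ring
  have hevent : {ω | s ≤ ∑ i, g i ω ^ 2 - d} = {ω | d + s ≤ ∑ i, g i ω ^ 2} := by
    ext ω; simp only [Set.mem_ofPred_eq, le_sub_iff_add_le']
  have htail := measureReal_card_add_le_sum_sq_le hindep hlaw (by positivity : 0 ≤ s)
  rw [Fintype.card_fin] at htail
  rw [hevent, hexponent, ENNReal.le_ofReal_iff_toReal_le (measure_ne_top _ _) (exp_pos _).le]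
  exact htail

/-- Lemma 2 (χ² tail bound): if `Z_d = ∑_{i<d} gᵢ²` with `g₀,…,g_{d-1}` i.i.d. standard
Gaussian (so `Z_d` is χ² with `d` degrees of freedom), then for all `x > 0`,
`P(Z_d - d ≥ x √(2d)) ≤ exp(-x²/(2(1 + x√(2/d))))`. -/
theorem chi_square_tail_bound
    (d : ℕ) (hd : 1 ≤ d)
    (Ω : Type*) [MeasurableSpace Ω] (P : Measure Ω) [IsProbabilityMeasure P]
    (g : Fin d → Ω → ℝ) (hmeas : ∀ i, Measurable (g i))
    (hindep : iIndepFun g P)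
    (hlaw : ∀ i, P.map (g i) = gaussianReal 0 1)
    (x : ℝ) (hx : 0 < x) :
    P {ω | x * Real.sqrt (2 * d) ≤ (∑ i, (g i ω) ^ 2) - d}
      ≤ ENNReal.ofReal (Real.exp (-(x ^ 2) / (2 * (1 + x * Real.sqrt (2 / d))))) :=
  chi_square_tail_bound_general d hd Ω P g hindep hlaw x hx
end

section
/- (Maurey approximation of convex combinations.) Let f, f_1,…,f_M ∈ 𝓕₀ and 1 ≤ m ≤ M. Let 𝒞 be the set of functions h of the form h(x) = (1/m) Σ_{j=1}^M k_j f_j(x) with k_j ∈ {0,1,…,m} and Σ_{j=1}^M k_j ≤ m. Then min_{g∈𝒞} ‖g − f‖_n² ≤ min_{λ∈Λ^M} ‖f_λ − f‖_n² + L²/m, and likewise for the L₂(μ) norm: min_{g∈𝒞} ‖g − f‖² ≤ min_{λ∈Λ^M} ‖f_λ − f‖² + L²/m. -/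
open MeasureTheory ProbabilityTheory

noncomputable section

/-- Empirical squared norm `‖g‖_n² = n⁻¹ ∑ᵢ g(Xᵢ)²`. -/
def empNormSq {𝒳 : Type*} {n : ℕ} (X : Fin n → 𝒳) (g : 𝒳 → ℝ) : ℝ :=
  (n : ℝ)⁻¹ * ∑ i, (g (X i)) ^ 2

/-- Linear combination `f_λ = ∑ⱼ λⱼ fⱼ`. -/
def fLin {𝒳 : Type*} {M : ℕ} (fs : Fin M → 𝒳 → ℝ) (l : Fin M → ℝ) : 𝒳 → ℝ :=
  fun x => ∑ j, l j * fs j x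

/- ### Auxiliary lemmas for the Maurey argument -/

lemma maurey_pi_succ_sum {ι : Type*} [Fintype ι] {m : ℕ} (g : (Fin (m+1) → ι) → ℝ) :
    ∑ J : Fin (m+1) → ι, g J = ∑ j : ι, ∑ J : Fin m → ι, g (Fin.cons j J) := by
  rw [← (Fintype.sum_equiv (Fin.consEquiv fun _ => ι) _ g (fun x => rfl)), Fintype.sum_prod_type]
  rfl

/-- First and second moments of a sum of `m` i.i.d. draws, expressed as finite sums. -/
lemma maurey_moments {ι : Type*} [Fintype ι] (p a : ι → ℝ) (hp : ∑ j, p j = 1) (m : ℕ) :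
    (∑ J : Fin m → ι, ∏ i, p (J i)) = 1 ∧
    (∑ J : Fin m → ι, (∏ i, p (J i)) * (∑ i, a (J i))) = m * (∑ j, p j * a j) ∧
    (∑ J : Fin m → ι, (∏ i, p (J i)) * (∑ i, a (J i))^2)
      = m * (∑ j, p j * a j ^ 2) + ((m:ℝ) * (m-1)) * (∑ j, p j * a j)^2 := by
  induction m with
  | zero => simp
  | succ m ih =>
    obtain ⟨h0, h1, h2⟩ := ih
    refine ⟨?_, ?_, ?_⟩
    · rw [maurey_pi_succ_sum]
      have : ∀ j : ι, (∑ J : Fin m → ι, ∏ i, p ((Fin.cons j J : Fin (m+1) → ι) i)) = p j := by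
        intro j
        simp only [Fin.prod_univ_succ, Fin.cons_zero, Fin.cons_succ]
        rw [← Finset.mul_sum, h0, mul_one]
      simp [this, hp]
    · rw [maurey_pi_succ_sum]
      have : ∀ j : ι, (∑ J : Fin m → ι, (∏ i, p ((Fin.cons j J : Fin (m+1) → ι) i)) * (∑ i, a ((Fin.cons j J : Fin (m+1) → ι) i)))
          = p j * a j + p j * (m * (∑ j, p j * a j)) := by
        intro j
        simp only [Fin.prod_univ_succ, Fin.sum_univ_succ, Fin.cons_zero, Fin.cons_succ]
        have : ∀ J : Fin m → ι, (p j * ∏ i, p (J i)) * (a j + ∑ i, a (J i))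
            = p j * a j * (∏ i, p (J i)) + p j * ((∏ i, p (J i)) * (∑ i, a (J i))) := by
          intro J; ring
        rw [Finset.sum_congr rfl (fun J _ => this J), Finset.sum_add_distrib,
          ← Finset.mul_sum, ← Finset.mul_sum, h0, h1, mul_one]
      rw [Finset.sum_congr rfl (fun j _ => this j), Finset.sum_add_distrib,
        ← Finset.sum_mul, hp]
      push_cast
      ring
    · rw [maurey_pi_succ_sum]
      have : ∀ j : ι, (∑ J : Fin m → ι, (∏ i, p ((Fin.cons j J : Fin (m+1) → ι) i)) * (∑ i, a ((Fin.cons j J : Fin (m+1) → ι) i))^2)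
          = p j * a j ^ 2 + 2 * (p j * a j) * (m * (∑ j, p j * a j))
            + p j * (m * (∑ j, p j * a j ^ 2) + ((m:ℝ) * (m-1)) * (∑ j, p j * a j)^2) := by
        intro j
        simp only [Fin.prod_univ_succ, Fin.sum_univ_succ, Fin.cons_zero, Fin.cons_succ]
        have : ∀ J : Fin m → ι, (p j * ∏ i, p (J i)) * (a j + ∑ i, a (J i))^2
            = p j * a j ^ 2 * (∏ i, p (J i)) + 2 * (p j * a j) * ((∏ i, p (J i)) * (∑ i, a (J i)))
              + p j * ((∏ i, p (J i)) * (∑ i, a (J i))^2) := by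
          intro J; ring
        rw [Finset.sum_congr rfl (fun J _ => this J), Finset.sum_add_distrib,
          Finset.sum_add_distrib, ← Finset.mul_sum, ← Finset.mul_sum, ← Finset.mul_sum,
          h0, h1, h2, mul_one]
      rw [Finset.sum_congr rfl (fun j _ => this j), Finset.sum_add_distrib, Finset.sum_add_distrib,
        ← Finset.sum_mul, ← Finset.sum_mul, hp]
      have h3 : ∑ x : ι, 2 * (p x * a x) = 2 * ∑ x : ι, p x * a x :=
        (Finset.mul_sum _ _ _).symm
      rw [h3]
      push_cast
      ring

/-- The key pointwise variance bound for the Maurey sampling argument. -/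
lemma maurey_key_pointwise {ι : Type*} [Fintype ι] (p a : ι → ℝ) (hp : ∑ j, p j = 1)
    (m : ℕ) (hm : 1 ≤ m) (c L : ℝ) (ha : ∀ j, |a j| ≤ L) (hp0 : ∀ j, 0 ≤ p j) :
    ∑ J : Fin m → ι, (∏ i, p (J i)) * ((m:ℝ)⁻¹ * (∑ i, a (J i)) - c)^2
      ≤ ((∑ j, p j * a j) - c)^2 + L^2 / m := by
  obtain ⟨h0, h1, h2⟩ := maurey_moments p a hp m
  have hm0 : (0:ℝ) < m := by exact_mod_cast hm
  have expand : ∀ J : Fin m → ι, (∏ i, p (J i)) * ((m:ℝ)⁻¹ * (∑ i, a (J i)) - c)^2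
      = (m:ℝ)⁻¹^2 * ((∏ i, p (J i)) * (∑ i, a (J i))^2)
        - 2*c*(m:ℝ)⁻¹ * ((∏ i, p (J i)) * (∑ i, a (J i))) + c^2 * (∏ i, p (J i)) := fun J => by
    ring
  rw [Finset.sum_congr rfl fun J _ => expand J, Finset.sum_add_distrib,
    Finset.sum_sub_distrib, ← Finset.mul_sum, ← Finset.mul_sum, ← Finset.mul_sum, h0, h1, h2,
    mul_one]
  have hb : (∑ j, p j * a j ^ 2) ≤ L ^ 2 := by
    calc (∑ j, p j * a j ^ 2) ≤ ∑ j, p j * L ^ 2 := by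
          refine Finset.sum_le_sum fun j _ => mul_le_mul_of_nonneg_left ?_ (hp0 j)
          rw [← sq_abs]
          exact pow_le_pow_left₀ (abs_nonneg _) (ha j) 2
      _ = L ^ 2 := by rw [← Finset.sum_mul, hp, one_mul]
  have heq : (m:ℝ)⁻¹^2 * ((m:ℝ) * (∑ j, p j * a j ^ 2) + ((m:ℝ) * ((m:ℝ)-1)) * (∑ j, p j * a j)^2)
      - 2*c*(m:ℝ)⁻¹ * ((m:ℝ) * (∑ j, p j * a j)) + c^2
      = ((∑ j, p j * a j) - c)^2 + ((∑ j, p j * a j ^ 2) - (∑ j, p j * a j)^2) / m := by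
    field_simp
    ring
  rw [heq]
  gcongr
  have := sq_nonneg (∑ j, p j * a j)
  linarith

lemma maurey_swap_avg {α β : Type*} [Fintype α] [Fintype β] (w : α → ℝ) (q : β → α → ℝ) (c : ℝ) :
    ∑ J, w J * (c * ∑ i, q i J) = c * ∑ i, ∑ J, w J * q i J := by
  calc ∑ J, w J * (c * ∑ i, q i J) = ∑ J, ∑ i, c * (w J * q i J) := by
        refine Finset.sum_congr rfl fun J _ => ?_
        rw [Finset.mul_sum, Finset.mul_sum]
        exact Finset.sum_congr rfl fun i _ => by ring
    _ = c * ∑ i, ∑ J, w J * q i J := by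
        rw [Finset.sum_comm, Finset.mul_sum]
        refine Finset.sum_congr rfl fun i _ => ?_
        rw [Finset.mul_sum]

/-- Number of occurrences of `some j` in the sample `J`. -/
def maureyCnt {M m : ℕ} (J : Fin m → Option (Fin M)) (j : Fin M) : ℕ :=
  (Finset.univ.filter (fun i => J i = some j)).card

lemma maureyCnt_le {M m : ℕ} (J : Fin m → Option (Fin M)) (j : Fin M) : maureyCnt J j ≤ m := by
  have := Finset.card_filter_le (Finset.univ : Finset (Fin m)) (fun i => J i = some j)
  simpa [maureyCnt] using this

lemma maureyCnt_sum_le {M m : ℕ} (J : Fin m → Option (Fin M)) : ∑ j, maureyCnt J j ≤ m := by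
  have h := Finset.card_eq_sum_card_fiberwise
    (f := J) (s := Finset.univ) (t := (Finset.univ : Finset (Option (Fin M))))
    (fun x _ => Finset.mem_univ _)
  rw [Finset.card_univ, Fintype.card_fin, Fintype.sum_option] at h
  have h2 : ∑ j, maureyCnt J j
      = ∑ j : Fin M, (Finset.univ.filter (fun a => J a = some j)).card := rfl
  omega

lemma maureyCnt_S {𝒳 : Type*} {M m : ℕ} (fs : Fin M → 𝒳 → ℝ) (x : 𝒳)
    (J : Fin m → Option (Fin M)) :
    ∑ j, (maureyCnt J j : ℝ) * fs j x = ∑ i, (J i).elim 0 (fun j => fs j x) := by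
  have h1 : ∀ j : Fin M, (maureyCnt J j : ℝ) * fs j x
      = ∑ i ∈ Finset.univ.filter (fun i => J i = some j), fs j x := by
    intro j
    rw [Finset.sum_const, maureyCnt, nsmul_eq_mul]
  rw [Finset.sum_congr rfl fun j _ => h1 j]
  simp only [Finset.sum_filter]
  rw [Finset.sum_comm]
  refine Finset.sum_congr rfl fun i _ => ?_
  cases h : J i with
  | none => simp [h]
  | some j0 => simp [h]

set_option maxHeartbeats 1600000

/-- Lemma A.1 (Maurey approximation of convex combinations): the minimum over the finite
set `𝒞` of functions `h = (1/m) ∑ⱼ kⱼ fⱼ`, `kⱼ ∈ {0,…,m}`, `∑ⱼ kⱼ ≤ m`, of the squared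
distance to `f` exceeds the minimum over the simplex `Λ^M` by at most `L²/m`, both for
the empirical norm `‖·‖_n` and for the `L₂(μ)` norm. -/
theorem maurey_approximation
    (𝒳 : Type*) [MeasurableSpace 𝒳] (μ : Measure 𝒳) [IsProbabilityMeasure μ]
    (n M m : ℕ) (hn : 1 ≤ n) (hm : 1 ≤ m) (hmM : m ≤ M)
    (X : Fin n → 𝒳) (L : ℝ) (f : 𝒳 → ℝ) (fs : Fin M → 𝒳 → ℝ)
    (hf : ∀ x, |f x| ≤ L) (hfs : ∀ j x, |fs j x| ≤ L)
    (hfmeas : Measurable f) (hfsmeas : ∀ j, Measurable (fs j)) :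
    ((⨅ k : {k : Fin M → ℕ // (∀ j, k j ≤ m) ∧ ∑ j, k j ≤ m},
        empNormSq X (fun x => (m : ℝ)⁻¹ * ∑ j, (k.1 j : ℝ) * fs j x - f x))
      ≤ (⨅ l : {l : Fin M → ℝ // (∀ j, 0 ≤ l j) ∧ ∑ j, l j ≤ 1},
          empNormSq X (fun x => fLin fs l.1 x - f x)) + L ^ 2 / m) ∧
    ((⨅ k : {k : Fin M → ℕ // (∀ j, k j ≤ m) ∧ ∑ j, k j ≤ m},
        ∫ x, ((m : ℝ)⁻¹ * ∑ j, (k.1 j : ℝ) * fs j x - f x) ^ 2 ∂μ)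
      ≤ (⨅ l : {l : Fin M → ℝ // (∀ j, 0 ≤ l j) ∧ ∑ j, l j ≤ 1},
          ∫ x, (fLin fs l.1 x - f x) ^ 2 ∂μ) + L ^ 2 / m) := by
  classical
  have hL : (0:ℝ) ≤ L := le_trans (abs_nonneg _) (hf (X ⟨0, hn⟩))
  have hm0 : (0:ℝ) < m := by exact_mod_cast hm
  have hn0 : (0:ℝ) < n := by exact_mod_cast hn
  have hLam : Nonempty {l : Fin M → ℝ // (∀ j, 0 ≤ l j) ∧ ∑ j, l j ≤ 1} :=
    ⟨⟨fun _ => 0, fun _ => le_refl _, by simp⟩⟩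
  -- a bound on coefficient combinations
  have hcomb : ∀ (c : Fin M → ℝ), (∀ j, 0 ≤ c j) → (∑ j, c j) ≤ 1 → ∀ x,
      |∑ j, c j * fs j x| ≤ L := by
    intro c hc0 hc1 x
    calc |∑ j, c j * fs j x| ≤ ∑ j, |c j * fs j x| := Finset.abs_sum_le_sum_abs _ _
      _ ≤ ∑ j, c j * L := by
          refine Finset.sum_le_sum fun j _ => ?_
          rw [abs_mul, abs_of_nonneg (hc0 j)]
          exact mul_le_mul_of_nonneg_left (hfs j x) (hc0 j)
      _ = (∑ j, c j) * L := (Finset.sum_mul _ _ _).symm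
      _ ≤ 1 * L := mul_le_mul_of_nonneg_right hc1 hL
      _ = L := one_mul L
  -- given λ in the simplex, set up the sampling distribution and the pointwise bound
  have main : ∀ l : {l : Fin M → ℝ // (∀ j, 0 ≤ l j) ∧ ∑ j, l j ≤ 1},
      ∃ p : Option (Fin M) → ℝ, (∀ o, 0 ≤ p o) ∧ (∑ o, p o = 1) ∧
      (∀ x, ∑ J : Fin m → Option (Fin M), (∏ i, p (J i)) *
          ((m:ℝ)⁻¹ * (∑ j, (maureyCnt J j : ℝ) * fs j x) - f x)^2
        ≤ (fLin fs l.1 x - f x)^2 + L^2/m) := by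
    rintro ⟨l, hl0, hl1⟩
    refine ⟨fun o => o.elim (1 - ∑ j, l j) l, ?_, ?_, ?_⟩
    · rintro (_|j)
      · simpa using hl1
      · exact hl0 j
    · rw [Fintype.sum_option]
      simp
    · intro x
      have ha : ∀ o : Option (Fin M), |o.elim 0 (fun j => fs j x)| ≤ L := by
        rintro (_|j)
        · simpa using hL
        · exact hfs j x
      have hp0 : ∀ o : Option (Fin M), 0 ≤ (fun o => o.elim (1 - ∑ j, l j) l) o := by
        rintro (_|j)
        · simpa using hl1
        · exact hl0 j
      have hps : ∑ o : Option (Fin M), (fun o => o.elim (1 - ∑ j, l j) l) o = 1 := by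
        rw [Fintype.sum_option]; simp
      have habar : ∑ o : Option (Fin M),
          (fun o => o.elim (1 - ∑ j, l j) l) o * (o.elim 0 (fun j => fs j x))
          = fLin fs l x := by
        rw [Fintype.sum_option]
        simp [fLin]
      have hk := maurey_key_pointwise (fun o : Option (Fin M) => o.elim (1 - ∑ j, l j) l)
        (fun o : Option (Fin M) => o.elim 0 (fun j => fs j x)) hps m hm (f x) L ha hp0
      rw [habar] at hk
      refine le_trans (le_of_eq (Finset.sum_congr rfl fun J _ => ?_)) hk
      rw [maureyCnt_S]
  constructor
  · -- empirical part
    rw [← sub_le_iff_le_add]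
    refine le_ciInf fun l => sub_le_iff_le_add.mpr ?_
    obtain ⟨p, hp0, hps, hkey⟩ := main l
    have hW0 : ∀ J : Fin m → Option (Fin M), 0 ≤ ∏ i, p (J i) :=
      fun J => Finset.prod_nonneg fun i _ => hp0 _
    have hWs : (∑ J : Fin m → Option (Fin M), ∏ i, p (J i)) = 1 :=
      (maurey_moments p (fun _ => 0) hps m).1
    set F : {k : Fin M → ℕ // (∀ j, k j ≤ m) ∧ ∑ j, k j ≤ m} → ℝ :=
      fun k => empNormSq X (fun x => (m : ℝ)⁻¹ * ∑ j, (k.1 j : ℝ) * fs j x - f x) with hF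
    have hFnn : ∀ k, 0 ≤ F k := by
      intro k
      rw [hF]
      unfold empNormSq
      positivity
    have hbdd : BddBelow (Set.range F) := ⟨0, by rintro y ⟨k, rfl⟩; exact hFnn k⟩
    calc (⨅ k, F k)
        = ∑ J : Fin m → Option (Fin M), (∏ i, p (J i)) * (⨅ k, F k) := by
          rw [← Finset.sum_mul, hWs, one_mul]
      _ ≤ ∑ J : Fin m → Option (Fin M), (∏ i, p (J i)) *
            F ⟨maureyCnt J, fun j => maureyCnt_le J j, maureyCnt_sum_le J⟩ :=
          Finset.sum_le_sum fun J _ =>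
            mul_le_mul_of_nonneg_left (ciInf_le hbdd _) (hW0 J)
      _ = (n:ℝ)⁻¹ * ∑ i : Fin n, ∑ J : Fin m → Option (Fin M), (∏ i', p (J i')) *
            ((m:ℝ)⁻¹ * (∑ j, (maureyCnt J j : ℝ) * fs j (X i)) - f (X i))^2 := by
          simp only [hF, empNormSq]
          exact maurey_swap_avg _ _ _
      _ ≤ (n:ℝ)⁻¹ * ∑ i : Fin n, ((fLin fs l.1 (X i) - f (X i))^2 + L^2/m) := by
          gcongr with i _
          exact hkey (X i)
      _ = empNormSq X (fun x => fLin fs l.1 x - f x) + L^2/m := by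
          rw [Finset.sum_add_distrib, mul_add, Finset.sum_const, Finset.card_univ,
            Fintype.card_fin, nsmul_eq_mul, ← mul_assoc, inv_mul_cancel₀ (ne_of_gt hn0),
            one_mul]
          rfl
  · -- L²(μ) part
    rw [← sub_le_iff_le_add]
    refine le_ciInf fun l => sub_le_iff_le_add.mpr ?_
    obtain ⟨p, hp0, hps, hkey⟩ := main l
    have hW0 : ∀ J : Fin m → Option (Fin M), 0 ≤ ∏ i, p (J i) :=
      fun J => Finset.prod_nonneg fun i _ => hp0 _
    have hWs : (∑ J : Fin m → Option (Fin M), ∏ i, p (J i)) = 1 :=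
      (maurey_moments p (fun _ => 0) hps m).1
    -- integrability facts
    have hqmeas : ∀ c : Fin M → ℝ,
        Measurable fun x => (∑ j, c j * fs j x - f x)^2 := by
      intro c
      have h1 : Measurable fun x => ∑ j, c j * fs j x :=
        Finset.measurable_sum _ fun j _ => (hfsmeas j).const_mul _
      exact (h1.sub hfmeas).pow_const 2
    have hqbound : ∀ c : Fin M → ℝ, (∀ j, 0 ≤ c j) → (∑ j, c j) ≤ 1 → ∀ x,
        ‖(∑ j, c j * fs j x - f x)^2‖ ≤ (2*L)^2 := by
      intro c hc0 hc1 x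
      have hd : |∑ j, c j * fs j x - f x| ≤ 2*L := by
        have h2 := abs_add_le (∑ j, c j * fs j x) (-(f x))
        rw [abs_neg] at h2
        have h3 := hcomb c hc0 hc1 x
        have h4 := hf x
        calc |∑ j, c j * fs j x - f x| = |∑ j, c j * fs j x + (-(f x))| := by
              rw [sub_eq_add_neg]
          _ ≤ 2*L := by linarith
      rw [Real.norm_eq_abs, abs_pow]
      exact pow_le_pow_left₀ (abs_nonneg _) hd 2
    have hqint : ∀ c : Fin M → ℝ, (∀ j, 0 ≤ c j) → (∑ j, c j) ≤ 1 →
        Integrable (fun x => (∑ j, c j * fs j x - f x)^2) μ := by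
      intro c hc0 hc1
      exact Integrable.mono' (integrable_const ((2*L)^2))
        (hqmeas c).aestronglyMeasurable (ae_of_all _ (hqbound c hc0 hc1))
    -- the count-based integrands are of the above form
    have hrw : ∀ (k : Fin M → ℕ) (x : 𝒳), (m : ℝ)⁻¹ * ∑ j, (k j : ℝ) * fs j x
        = ∑ j, ((m:ℝ)⁻¹ * (k j : ℝ)) * fs j x := by
      intro k x
      rw [Finset.mul_sum]
      exact Finset.sum_congr rfl fun j _ => by ring
    have hcnt_c : ∀ (k : Fin M → ℕ), (∑ j, k j ≤ m) →
        ((∀ j, 0 ≤ (m:ℝ)⁻¹ * (k j : ℝ)) ∧ (∑ j, (m:ℝ)⁻¹ * (k j : ℝ)) ≤ 1) := by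
      intro k hk
      constructor
      · intro j; positivity
      · rw [← Finset.mul_sum]
        rw [inv_mul_le_iff₀ hm0, mul_one]
        exact_mod_cast hk
    have hqint' : ∀ (k : Fin M → ℕ), (∑ j, k j ≤ m) →
        Integrable (fun x => ((m : ℝ)⁻¹ * ∑ j, (k j : ℝ) * fs j x - f x)^2) μ := by
      intro k hk
      obtain ⟨h1, h2⟩ := hcnt_c k hk
      have := hqint _ h1 h2
      refine this.congr (ae_of_all _ fun x => ?_)
      simp only [hrw k x]
    have hflin_int : Integrable (fun x => (fLin fs l.1 x - f x)^2) μ := by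
      have := hqint l.1 l.2.1 l.2.2
      refine this.congr (ae_of_all _ fun x => rfl)
    set F : {k : Fin M → ℕ // (∀ j, k j ≤ m) ∧ ∑ j, k j ≤ m} → ℝ :=
      fun k => ∫ x, ((m : ℝ)⁻¹ * ∑ j, (k.1 j : ℝ) * fs j x - f x) ^ 2 ∂μ with hF
    have hFnn : ∀ k, 0 ≤ F k := by
      intro k
      exact integral_nonneg fun x => sq_nonneg _
    have hbdd : BddBelow (Set.range F) := ⟨0, by rintro y ⟨k, rfl⟩; exact hFnn k⟩
    calc (⨅ k, F k)
        = ∑ J : Fin m → Option (Fin M), (∏ i, p (J i)) * (⨅ k, F k) := by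
          rw [← Finset.sum_mul, hWs, one_mul]
      _ ≤ ∑ J : Fin m → Option (Fin M), (∏ i, p (J i)) *
            F ⟨maureyCnt J, fun j => maureyCnt_le J j, maureyCnt_sum_le J⟩ :=
          Finset.sum_le_sum fun J _ =>
            mul_le_mul_of_nonneg_left (ciInf_le hbdd _) (hW0 J)
      _ = ∫ x, ∑ J : Fin m → Option (Fin M), (∏ i, p (J i)) *
            ((m:ℝ)⁻¹ * (∑ j, (maureyCnt J j : ℝ) * fs j x) - f x)^2 ∂μ := by
          rw [Finset.sum_congr rfl fun J _ =>
            (integral_const_mul (∏ i, p (J i)) _).symm]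
          exact (integral_finset_sum _ fun J _ =>
            ((hqint' (maureyCnt J) (maureyCnt_sum_le J)).const_mul _)).symm
      _ ≤ ∫ x, ((fLin fs l.1 x - f x)^2 + L^2/m) ∂μ := by
          refine integral_mono (integrable_finset_sum _ fun J _ =>
            ((hqint' (maureyCnt J) (maureyCnt_sum_le J)).const_mul _))
            (hflin_int.add (integrable_const _)) ?_
          intro x
          exact hkey x
      _ = (∫ x, (fLin fs l.1 x - f x)^2 ∂μ) + L^2/m := by
          rw [integral_add hflin_int (integrable_const _), integral_const]
          simp
end
end
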